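/- arXiv:2510.17678 — 6 statements merged into one kernel-verified Lean document; each statement's English description precedes it below -/
import Mathlib

section
/- Let P : ℕ → ℚ be the sequence defined by P(0) = P(1) = 1 and, for n ≥ 2, P(n) = 2 + n(n−1)/286 + δ13(n mod 13) + δ11(n mod 11). Then in the formal power series ring ℚ⟦t⟧ one has (∑_{n≥0} P(n)·tⁿ)·(1−t)·(1−t¹¹)·(1−t²⁶)·(1−t³⁹) = 1 − t⁷⁸; equivalently, ∑_{n≥0} P(n)·tⁿ = (1−t⁷⁸)/((1−t)(1−t¹¹)(1−t²⁶)(1−t³⁹)). -/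
/-!
Up to the corrections at `n = 0, 1`, `143 P(n)` is `286 + C(n, 2)` plus an `11`-multiple of a
`13`-periodic and a `13`-multiple of an `11`-periodic integer sequence. Their generating series are
`286/(1-t)`, `t²/(1-t)³` and `p(t)/(1-tᵐ)`, where `p` lists one period. Each denominator divides
`(1-t)(1-t¹¹)(1-t²⁶)(1-t³⁹)`, so the theorem becomes a polynomial identity. The factor `143` clears
the denominators, which `ring` cannot handle in `ℚ⟦X⟧` since it is not a field.
-/

open PowerSeries

/-- Riemann–Roch correction term of the cyclic quotient singularity `1/13(1,6)`
evaluated at `n K`, as a function of `n mod 13`. -/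
def delta13 : ℕ → ℚ
  | 0 => 0
  | 1 => 0
  | 2 => -6/13
  | 3 => -5/13
  | 4 => -10/13
  | 5 => -8/13
  | 6 => -12/13
  | 7 => -9/13
  | 8 => -12/13
  | 9 => -8/13
  | 10 => -10/13
  | 11 => -5/13
  | 12 => -6/13
  | _ => 0

/-- Riemann–Roch correction term of the cyclic quotient singularity `1/11(1,7)`
evaluated at `n K`, as a function of `n mod 11`. -/
def delta11 : ℕ → ℚ
  | 0 => 0
  | 1 => 0
  | 2 => -6/11
  | 3 => -7/11
  | 4 => -3/11
  | 5 => -5/11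
  | 6 => -2/11
  | 7 => -5/11
  | 8 => -3/11
  | 9 => -7/11
  | 10 => -6/11
  | _ => 0

namespace PowerSeries

variable {R : Type*} [CommRing R]

theorem mk_choose_mul_one_sub_X_pow (d : ℕ) :
    (mk fun n ↦ (n.choose d : R)) * (1 - X) ^ (d + 1) = X ^ d := by
  have hshift : (mk fun n ↦ (n.choose d : R)) = X ^ d * mk fun n ↦ ((d + n).choose d : R) := by
    ext n
    rw [coeff_X_pow_mul', coeff_mk, coeff_mk]
    split_ifs with h
    · rw [Nat.add_sub_cancel' h]
    · rw [Nat.choose_eq_zero_of_lt (not_le.mp h), Nat.cast_zero]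
  rw [hshift, mul_assoc, mk_add_choose_mul_one_sub_pow_eq_one, mul_one]

theorem mk_mod_mul_one_sub_X_pow (f : ℕ → R) (m : ℕ) :
    (mk fun n ↦ f (n % m)) * (1 - X ^ m) = ∑ k ∈ Finset.range m, C (f k) * X ^ k := by
  ext n
  rw [mul_sub, mul_one, map_sub, coeff_mk, coeff_mul_X_pow', coeff_mk, map_sum]
  simp only [coeff_C_mul_X_pow, Finset.sum_ite_eq, Finset.mem_range]
  split_ifs with hmn hnm hnm
  · omega
  · rw [← Nat.mod_eq_sub_mod hmn, sub_self]
  · rw [Nat.mod_eq_of_lt hnm, sub_zero]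
  · omega

end PowerSeries

theorem mk_delta13_mod_mul_one_sub_X_pow :
    (mk fun n ↦ 13 * delta13 (n % 13) : ℚ⟦X⟧) * (1 - X ^ 13) =
      -(6 * X ^ 2 + 5 * X ^ 3 + 10 * X ^ 4 + 8 * X ^ 5 + 12 * X ^ 6 + 9 * X ^ 7 + 12 * X ^ 8
        + 8 * X ^ 9 + 10 * X ^ 10 + 5 * X ^ 11 + 6 * X ^ 12) := by
  rw [mk_mod_mul_one_sub_X_pow (fun k ↦ 13 * delta13 k)]
  norm_num [Finset.sum_range_succ, delta13, -map_mul, map_ofNat]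
  ring

theorem mk_delta11_mod_mul_one_sub_X_pow :
    (mk fun n ↦ 11 * delta11 (n % 11) : ℚ⟦X⟧) * (1 - X ^ 11) =
      -(6 * X ^ 2 + 7 * X ^ 3 + 3 * X ^ 4 + 5 * X ^ 5 + 2 * X ^ 6 + 5 * X ^ 7 + 3 * X ^ 8
        + 7 * X ^ 9 + 6 * X ^ 10) := by
  rw [mk_mod_mul_one_sub_X_pow (fun k ↦ 11 * delta11 k)]
  norm_num [Finset.sum_range_succ, delta11, -map_mul, map_ofNat]
  ring

theorem mk_plurigenera_decomposition (P : ℕ → ℚ) (hP0 : P 0 = 1) (hP1 : P 1 = 1)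
    (hP : ∀ n : ℕ, 2 ≤ n →
      P n = 2 + (n : ℚ) * ((n : ℚ) - 1) / 286 + delta13 (n % 13) + delta11 (n % 11)) :
    143 * mk P = 286 * mk 1 + (mk fun n ↦ (n.choose 2 : ℚ))
      + 11 * (mk fun n ↦ 13 * delta13 (n % 13)) + 13 * (mk fun n ↦ 11 * delta11 (n % 11))
      - 143 * (1 + X) := by
  ext n
  simp only [← map_ofNat C, map_add, map_sub, coeff_C_mul, coeff_mk, coeff_one, coeff_X, mul_add]
  rcases n with _ | _ | n
  · norm_num [hP0, delta13, delta11]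
  · norm_num [hP1, delta13, delta11]
  · rw [hP _ (by omega), Nat.cast_choose_two, if_neg (by omega), if_neg (by omega), Pi.one_apply]
    push_cast
    ring

/-- The generating series of the plurigenera of a stable surface with `p_g = 1` and
`K² = 1/143` equals `(1 - t⁷⁸)/((1-t)(1-t¹¹)(1-t²⁶)(1-t³⁹))`. -/
theorem statement0 (P : ℕ → ℚ) (hP0 : P 0 = 1) (hP1 : P 1 = 1)
    (hP : ∀ n : ℕ, 2 ≤ n →
      P n = 2 + (n : ℚ) * ((n : ℚ) - 1) / 286 + delta13 (n % 13) + delta11 (n % 11)) :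
    (PowerSeries.mk P : PowerSeries ℚ) * (1 - X) * (1 - X ^ 11) * (1 - X ^ 26) * (1 - X ^ 39)
      = 1 - X ^ 78 := by
  have hdecomp := mk_plurigenera_decomposition P hP0 hP1 hP
  have hconst := mk_one_mul_one_sub_eq_one ℚ
  have hquad := mk_choose_mul_one_sub_X_pow (R := ℚ) 2
  have h13 := mk_delta13_mod_mul_one_sub_X_pow
  have h11 := mk_delta11_mod_mul_one_sub_X_pow
  refine mul_left_cancel₀ (show (143 : ℚ⟦X⟧) ≠ 0 by rw [← map_ofNat C]; simp) ?_
  -- each coefficient is `(1-X)(1-X¹¹)(1-X²⁶)(1-X³⁹)` divided by the denominator of its identity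
  linear_combination (norm := skip)
    (1 - X) * (1 - X ^ 11) * (1 - X ^ 26) * (1 - X ^ 39) * hdecomp
    + 286 * (1 - X ^ 11) * (1 - X ^ 26) * (1 - X ^ 39) * hconst
    + (∑ i ∈ Finset.range 11, X ^ i) * (∑ i ∈ Finset.range 26, X ^ i) * (1 - X ^ 39) * hquad
    + 11 * (1 - X) * (1 - X ^ 11) * (1 + X ^ 13) * (1 - X ^ 39) * h13
    + 13 * (1 - X) * (1 - X ^ 26) * (1 - X ^ 39) * h11
  simp only [Finset.sum_range_succ, Finset.sum_range_zero]
  ring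
end

section
/- Let P : ℕ → ℚ be the sequence defined by P(0) = 1 and, for n ≥ 1, P(n) = 2 + n²/84 + δ2(n mod 2) + δ3(n mod 3) + δ7(n mod 7). Then in the formal power series ring ℚ⟦t⟧ one has (∑_{n≥0} P(n)·tⁿ)·(1−t)·(1−t⁶)·(1−t¹⁴)·(1−t²¹) = 1 − t⁴²; equivalently, ∑_{n≥0} P(n)·tⁿ = (1−t⁴²)/((1−t)(1−t⁶)(1−t¹⁴)(1−t²¹)). -/
open PowerSeries

/-- Riemann–Roch correction term of the cyclic quotient singularity `1/2(1,1)`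
evaluated at `n D`, as a function of `n mod 2`. -/
def delta2 : ℕ → ℚ
  | 0 => 0
  | 1 => -1/4
  | _ => 0

/-- Riemann–Roch correction term of the cyclic quotient singularity `1/3(1,2)`
evaluated at `n D`, as a function of `n mod 3`. -/
def delta3 : ℕ → ℚ
  | 0 => 0
  | 1 => -1/3
  | 2 => -1/3
  | _ => 0

/-- Riemann–Roch correction term of the cyclic quotient singularity `1/7(1,6)`
evaluated at `n D`, as a function of `n mod 7`. -/
def delta7 : ℕ → ℚ
  | 0 => 0
  | 1 => -3/7
  | 2 => -5/7
  | 3 => -6/7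
  | 4 => -6/7
  | 5 => -5/7
  | 6 => -3/7
  | _ => 0

/-!
Away from `n = 0`, `P` is the quasi-polynomial `2 + n²/84` plus corrections of periods 2, 3
and 7. The generating series of these pieces are rational with denominators `1 - t`,
`(1 - t)³`, `1 - t²`, `1 - t³` and `1 - t⁷`, each of which divides
`Q = (1 - t)(1 - t⁶)(1 - t¹⁴)(1 - t²¹)`; multiplying by `Q` therefore turns every piece into an
explicit polynomial, and the theorem becomes a polynomial identity (the value `P 0 = 1`
instead of `2` contributes `-Q`).
-/

namespace PowerSeries

variable {R : Type*} [CommRing R]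

theorem mk_mul_one_sub_X_pow_of_periodic {f : ℕ → R} {p : ℕ} (hf : Function.Periodic f p) :
    mk f * (1 - X ^ p) = ∑ i ∈ Finset.range p, C (f i) * X ^ i := by
  ext n
  rw [mul_sub, mul_one, map_sub, coeff_mul_X_pow', map_sum]
  simp only [coeff_mk, coeff_C_mul_X_pow, Finset.sum_ite_eq, Finset.mem_range]
  by_cases hn : p ≤ n
  · rw [if_pos hn, if_neg (by omega), ← hf (n - p), Nat.sub_add_cancel hn, sub_self]
  · rw [if_neg hn, if_pos (by omega), sub_zero]

theorem mk_sq_mul_one_sub_X_pow_three : mk (fun n => (n : R) ^ 2) * (1 - X) ^ 3 = X + X ^ 2 := by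
  have hsq : mk (fun n => (n : R) ^ 2) = C 2 * mk (fun n => ((2 + n).choose 2 : R))
      - C 3 * mk (fun n => ((1 + n).choose 1 : R)) + mk (fun n => ((0 + n).choose 0 : R)) := by
    ext n
    have hchoose : ((2 + n).choose 2 : R) * 2 = (2 + n) * (1 + n) := by
      have : (2 + n).choose 2 * 2 = (2 + n) * (1 + n) := by
        rw [Nat.choose_two_right, Nat.div_mul_cancel (Nat.even_mul_pred_self _).two_dvd,
          show 2 + n - 1 = 1 + n by omega]
      exact_mod_cast congrArg (Nat.cast (R := R)) this
    simp only [coeff_mk, map_add, map_sub, coeff_C_mul, Nat.choose_one_right, Nat.choose_zero_right]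
    push_cast
    linear_combination -hchoose
  rw [hsq, map_ofNat C 2, map_ofNat C 3]
  linear_combination 2 * mk_add_choose_mul_one_sub_pow_eq_one R 2
    - 3 * (1 - X) * mk_add_choose_mul_one_sub_pow_eq_one R 1
    + (1 - X) ^ 2 * mk_add_choose_mul_one_sub_pow_eq_one R 0

theorem mk_sq_mul_one_sub_X_mul_one_sub_X_pow_mul_one_sub_X_pow (a b : ℕ) :
    mk (fun n => (n : R) ^ 2) * ((1 - X) * (1 - X ^ a) * (1 - X ^ b))
      = (X + X ^ 2) * (∑ i ∈ Finset.range a, X ^ i) * ∑ i ∈ Finset.range b, X ^ i := by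
  rw [← mul_neg_geom_sum, ← mul_neg_geom_sum]
  linear_combination (∑ i ∈ Finset.range a, (X : R⟦X⟧) ^ i) * (∑ i ∈ Finset.range b, X ^ i) *
    mk_sq_mul_one_sub_X_pow_three (R := R)

end PowerSeries

theorem mk_delta2_mul_one_sub_X_pow_six :
    mk (fun n => 84 * delta2 (n % 2)) * (1 - X ^ 6) = -21 * X * (1 + X ^ 2 + X ^ 4) := by
  rw [show (1 - X ^ 6 : ℚ⟦X⟧) = (1 - X ^ 2) * (1 + X ^ 2 + X ^ 4) by ring, ← mul_assoc,
    mk_mul_one_sub_X_pow_of_periodic (f := fun n => 84 * delta2 (n % 2))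
      ((Nat.periodic_mod 2).comp fun m => 84 * delta2 m)]
  norm_num [Finset.sum_range_succ, delta2, -map_mul, map_ofNat]

theorem mk_delta3_mul_one_sub_X_pow_six :
    mk (fun n => 84 * delta3 (n % 3)) * (1 - X ^ 6) = -28 * (X + X ^ 2) * (1 + X ^ 3) := by
  rw [show (1 - X ^ 6 : ℚ⟦X⟧) = (1 - X ^ 3) * (1 + X ^ 3) by ring, ← mul_assoc,
    mk_mul_one_sub_X_pow_of_periodic (f := fun n => 84 * delta3 (n % 3))
      ((Nat.periodic_mod 3).comp fun m => 84 * delta3 m)]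
  norm_num [Finset.sum_range_succ, delta3, -map_mul, map_ofNat]
  ring

theorem mk_delta7_mul_one_sub_X_pow_fourteen :
    mk (fun n => 84 * delta7 (n % 7)) * (1 - X ^ 14)
      = -12 * (3 * X + 5 * X ^ 2 + 6 * X ^ 3 + 6 * X ^ 4 + 5 * X ^ 5 + 3 * X ^ 6) * (1 + X ^ 7) := by
  rw [show (1 - X ^ 14 : ℚ⟦X⟧) = (1 - X ^ 7) * (1 + X ^ 7) by ring, ← mul_assoc,
    mk_mul_one_sub_X_pow_of_periodic (f := fun n => 84 * delta7 (n % 7))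
      ((Nat.periodic_mod 7).comp fun m => 84 * delta7 m)]
  norm_num [Finset.sum_range_succ, delta7, -map_mul, map_ofNat]
  ring

/-- The generating series of the plurigenera of a stable surface pair `(X, D)` with
`K_X ∼ 0`, `p_g(X,D) = 1` and `(K_X + D)² = 1/42` equals
`(1 - t⁴²)/((1-t)(1-t⁶)(1-t¹⁴)(1-t²¹))`. -/
theorem statement1 (P : ℕ → ℚ) (hP0 : P 0 = 1)
    (hP : ∀ n : ℕ, 1 ≤ n →
      P n = 2 + (n : ℚ) ^ 2 / 84 + delta2 (n % 2) + delta3 (n % 3) + delta7 (n % 7)) :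
    (PowerSeries.mk P : PowerSeries ℚ) * (1 - X) * (1 - X ^ 6) * (1 - X ^ 14) * (1 - X ^ 21)
      = 1 - X ^ 42 := by
  -- Clearing the denominator 84 leaves integer coefficients, which `linear_combination` handles.
  have hdecomp : C 84 * mk P = C 168 * mk 1 + mk (fun n => (n : ℚ) ^ 2)
      + mk (fun n => 84 * delta2 (n % 2)) + mk (fun n => 84 * delta3 (n % 3))
      + mk (fun n => 84 * delta7 (n % 7)) - C 84 := by
    ext n
    rcases Nat.eq_zero_or_pos n with rfl | hn
    · norm_num [hP0, delta2, delta3, delta7]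
    · simp only [coeff_C_mul, coeff_mk, hP n hn, map_sub, map_add, Pi.one_apply, mul_one, coeff_C,
        hn.ne', ↓reduceIte, sub_zero]
      ring
  rw [map_ofNat C 84, map_ofNat C 168] at hdecomp
  have hsq := mk_sq_mul_one_sub_X_mul_one_sub_X_pow_mul_one_sub_X_pow (R := ℚ) 6 14
  simp only [Finset.sum_range_succ, Finset.sum_range_zero, zero_add] at hsq
  have h84 : (84 : ℚ⟦X⟧) ≠ 0 := fun h => by simpa [map_ofNat] using congrArg constantCoeff h
  refine mul_left_cancel₀ h84 ?_
  linear_combination (1 - X) * (1 - X ^ 6) * (1 - X ^ 14) * (1 - X ^ 21) * hdecomp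
    + 168 * (1 - X ^ 6) * (1 - X ^ 14) * (1 - X ^ 21) * mk_one_mul_one_sub_eq_one ℚ
    + (1 - X ^ 21) * hsq
    + (1 - X) * (1 - X ^ 14) * (1 - X ^ 21) * mk_delta2_mul_one_sub_X_pow_six
    + (1 - X) * (1 - X ^ 14) * (1 - X ^ 21) * mk_delta3_mul_one_sub_X_pow_six
    + (1 - X) * (1 - X ^ 6) * (1 - X ^ 21) * mk_delta7_mul_one_sub_X_pow_fourteen
end

section
/- Let f ∈ ℂ[w,x,y,z] be a nonzero polynomial that is weighted homogeneous of degree 42 with respect to the weights (w,x,y,z) ↦ (1,6,14,21). Then for every n ≥ 1 the ℂ-dimension of the n-th weighted-graded piece of the quotient ring ℂ[w,x,y,z]/(f) (i.e., of the image of the space of weighted-homogeneous polynomials of degree n under the quotient map) equals 2 + n²/84 + δ2(n mod 2) + δ3(n mod 3) + δ7(n mod 7), and for n = 0 it equals 1. -/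
open MvPolynomial

/-- The weights `(1, 6, 14, 21)` on the four variables `w, x, y, z`. -/
def wts : Fin 4 → ℕ := ![1, 6, 14, 21]

/-- The dimension of the `n`-th weighted-graded piece of `ℂ[w,x,y,z]/(f)`, i.e. of the image
of the weighted-homogeneous polynomials of degree `n` under the quotient map. -/
noncomputable def gradedPieceDim (f : MvPolynomial (Fin 4) ℂ) (n : ℕ) : ℕ :=
  Module.finrank ℂ
    ↥(Submodule.map (Ideal.Quotient.mkₐ ℂ (Ideal.span {f})).toLinearMap
        (weightedHomogeneousSubmodule ℂ wts n))

/-!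
The degree-`n` piece of `ℂ[w,x,y,z]/(f)` is the cokernel of multiplication by `f` from degree
`n - 42` to degree `n`, so its dimension is the number `Nw n` of monomials `w^a x^b y^c z^d` of
weight `n` with `a < 42` (the others are `w^42` times a monomial of weight `n - 42`). Splitting off
`x^7` and `y^3`, which also have weight `42`, in the same way gives `Nw (n + 42) = Nw n + n + 21`
for `n ≥ 1`, because the monomials of weight `m` with `a < 42`, `b < 7`, `c < 3` number exactly
`42` once `m ≥ 85`. The quasi-polynomial on the right satisfies the same recursion, and the two
agree for `1 ≤ n ≤ 42` by direct computation.
-/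

open Module

namespace MvPolynomial

variable {σ R : Type*} [CommSemiring R]

theorem IsWeightedHomogeneous.weightedHomogeneousComponent_add_mul {M : Type*}
    [AddCancelCommMonoid M] {w : σ → M} {f : MvPolynomial σ R} {e : M}
    (hf : IsWeightedHomogeneous w f e) (g : MvPolynomial σ R) (m : M) :
    weightedHomogeneousComponent w (e + m) (f * g) = f * weightedHomogeneousComponent w m g := by
  classical
  ext d
  simp only [coeff_weightedHomogeneousComponent, coeff_mul, mul_ite, mul_zero]
  split_ifs with hd
  · refine Finset.sum_congr rfl fun x hx => ?_
    by_cases hx₁ : coeff x.1 f = 0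
    · simp [hx₁]
    rw [Finset.HasAntidiagonal.mem_antidiagonal] at hx
    rw [← hx, map_add, hf hx₁] at hd
    rw [if_pos (add_left_cancel hd)]
  · refine (Finset.sum_eq_zero fun x hx => ?_).symm
    by_cases hx₁ : coeff x.1 f = 0
    · simp [hx₁]
    rw [Finset.HasAntidiagonal.mem_antidiagonal] at hx
    rw [if_neg]
    rintro hx₂
    exact hd (by rw [← hx, map_add, hf hx₁, hx₂])

theorem IsWeightedHomogeneous.weightedHomogeneousComponent_mul_of_lt {M : Type*}
    [AddCommMonoid M] [PartialOrder M] [CanonicallyOrderedAdd M] {w : σ → M}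
    {f : MvPolynomial σ R} {e n : M} (hf : IsWeightedHomogeneous w f e) (g : MvPolynomial σ R)
    (hn : n < e) : weightedHomogeneousComponent w n (f * g) = 0 := by
  classical
  ext d
  simp only [coeff_weightedHomogeneousComponent, coeff_mul, coeff_zero, ite_eq_right_iff]
  rintro rfl
  refine Finset.sum_eq_zero fun x hx => ?_
  by_cases hx₁ : coeff x.1 f = 0
  · simp [hx₁]
  rw [Finset.HasAntidiagonal.mem_antidiagonal] at hx
  refine absurd hn (not_lt_of_ge ?_)
  rw [← hx, map_add, hf hx₁]
  exact le_self_add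

theorem IsWeightedHomogeneous.exists_eq_mul_of_mem_span_singleton {M : Type*}
    [AddCancelCommMonoid M] {w : σ → M} {f p : MvPolynomial σ R} {e m : M}
    (hf : IsWeightedHomogeneous w f e) (hp : IsWeightedHomogeneous w p (e + m))
    (hpf : p ∈ Ideal.span {f}) : ∃ g, IsWeightedHomogeneous w g m ∧ p = f * g := by
  obtain ⟨g, rfl⟩ := Ideal.mem_span_singleton.mp hpf
  exact ⟨_, weightedHomogeneousComponent_isWeightedHomogeneous m g,
    by rw [← hf.weightedHomogeneousComponent_add_mul, weightedHomogeneousComponent_eq_self hp]⟩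

theorem IsWeightedHomogeneous.eq_zero_of_mem_span_singleton_of_lt {M : Type*}
    [AddCommMonoid M] [PartialOrder M] [CanonicallyOrderedAdd M] {w : σ → M}
    {f p : MvPolynomial σ R} {e n : M} (hf : IsWeightedHomogeneous w f e)
    (hp : IsWeightedHomogeneous w p n) (hpf : p ∈ Ideal.span {f}) (hn : n < e) : p = 0 := by
  obtain ⟨g, rfl⟩ := Ideal.mem_span_singleton.mp hpf
  rw [← weightedHomogeneousComponent_eq_self hp, hf.weightedHomogeneousComponent_mul_of_lt g hn]

theorem finrank_weightedHomogeneousSubmodule {M S : Type*} [AddCommMonoid M] [CommRing S]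
    [Nontrivial S] (w : σ → M) (m : M) :
    finrank S (weightedHomogeneousSubmodule S w m) =
      {d : σ →₀ ℕ | Finsupp.weight w d = m}.ncard := by
  rw [weightedHomogeneousSubmodule_eq_finsupp_supported, ← restrictSupport,
    finrank_eq_nat_card_basis (basisRestrictSupport S _), Nat.card_coe_set_eq]

section Quotient

variable {K : Type*} [Field K] {w : σ → ℕ} {f : MvPolynomial σ K} {e : ℕ}

theorem finrank_map_mk_weightedHomogeneousSubmodule_add [Finite σ] (hw : ∀ i, w i ≠ 0)
    (hf0 : f ≠ 0) (hf : IsWeightedHomogeneous w f e) (m : ℕ) :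
    finrank K ((weightedHomogeneousSubmodule K w (e + m)).map
        (Ideal.Quotient.mkₐ K (Ideal.span {f})).toLinearMap) +
      finrank K (weightedHomogeneousSubmodule K w m) =
      finrank K (weightedHomogeneousSubmodule K w (e + m)) := by
  have := Module.Finite.iff_fg.mpr (weightedHomogeneousSubmodule_fg K w hw (e + m))
  let mulF :
      weightedHomogeneousSubmodule K w m →ₗ[K] weightedHomogeneousSubmodule K w (e + m) :=
    (LinearMap.mulLeft K f).restrict fun _ hg => hf.mul hg
  have hinj : Function.Injective mulF := fun g h hgh =>
    Subtype.ext (mul_left_cancel₀ hf0 (congrArg Subtype.val hgh))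
  have hker : LinearMap.ker ((Ideal.Quotient.mkₐ K (Ideal.span {f})).toLinearMap.domRestrict _) =
      LinearMap.range mulF := by
    ext ⟨p, hp⟩
    simp only [LinearMap.mem_ker, LinearMap.domRestrict_apply, AlgHom.toLinearMap_apply,
      Ideal.Quotient.mkₐ_eq_mk, Ideal.Quotient.eq_zero_iff_mem, LinearMap.mem_range]
    constructor
    · intro hpf
      obtain ⟨g, hg, rfl⟩ := hf.exists_eq_mul_of_mem_span_singleton hp hpf
      exact ⟨⟨g, hg⟩, rfl⟩
    · rintro ⟨⟨g, _⟩, hg⟩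
      rw [← show f * g = p from congrArg Subtype.val hg]
      exact Ideal.mem_span_singleton.mpr (dvd_mul_right f g)
  rw [← LinearMap.range_domRestrict, ← LinearMap.finrank_range_of_inj hinj, ← hker,
    LinearMap.finrank_range_add_finrank_ker]

theorem finrank_map_mk_weightedHomogeneousSubmodule_of_lt (hf : IsWeightedHomogeneous w f e)
    {n : ℕ} (hn : n < e) :
    finrank K ((weightedHomogeneousSubmodule K w n).map
        (Ideal.Quotient.mkₐ K (Ideal.span {f})).toLinearMap) =
      finrank K (weightedHomogeneousSubmodule K w n) := by
  rw [← LinearMap.range_domRestrict]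
  refine LinearMap.finrank_range_of_inj (LinearMap.ker_eq_bot.mp ?_)
  refine (Submodule.eq_bot_iff _).mpr fun ⟨p, hp⟩ hpf => Subtype.ext ?_
  simp only [LinearMap.mem_ker, LinearMap.domRestrict_apply, AlgHom.toLinearMap_apply,
    Ideal.Quotient.mkₐ_eq_mk, Ideal.Quotient.eq_zero_iff_mem] at hpf
  exact hf.eq_zero_of_mem_span_singleton_of_lt hp hpf hn

end Quotient

end MvPolynomial

namespace Finsupp

variable {σ : Type*}

theorem mul_apply_le_weight (w : σ → ℕ) (d : σ →₀ ℕ) (i : σ) : w i * d i ≤ weight w d := by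
  have h := congrArg (weight w)
    (tsub_add_cancel_of_le (single_le_iff.mpr le_rfl : single i (d i) ≤ d))
  rw [map_add, weight_single, smul_eq_mul, Nat.mul_comm (d i)] at h
  omega

noncomputable def monomialCount (w : σ → ℕ) (P : (σ →₀ ℕ) → Prop) (n : ℕ) : ℕ :=
  {d : σ →₀ ℕ | weight w d = n ∧ P d}.ncard

variable {w : σ → ℕ} {P : (σ →₀ ℕ) → Prop}

theorem monomialCount_add_mul [Finite σ] (hw : ∀ i, w i ≠ 0) (i : σ) (k : ℕ)
    (hP : ∀ d, P (d + single i k) ↔ P d) (n : ℕ) :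
    monomialCount w P (n + w i * k) =
      monomialCount w P n + monomialCount w (fun d => P d ∧ d i < k) (n + w i * k) := by
  have hfin : {d : σ →₀ ℕ | weight w d = n + w i * k ∧ P d}.Finite :=
    (finite_of_nat_weight_eq w hw _).subset fun d hd => hd.1
  have hhigh : {d | weight w d = n + w i * k ∧ P d} ∩ {d | k ≤ d i} =
      (· + single i k) '' {d | weight w d = n ∧ P d} := by
    ext d
    simp only [Set.mem_inter_iff, Set.mem_ofPred_eq, Set.mem_image]
    constructor
    · rintro ⟨⟨hd, hPd⟩, hk⟩
      have hle : single i k ≤ d := single_le_iff.mpr hk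
      refine ⟨d - single i k, ⟨?_, ?_⟩, tsub_add_cancel_of_le hle⟩
      · rw [← tsub_add_cancel_of_le hle, map_add, weight_single, smul_eq_mul,
          Nat.mul_comm k] at hd
        omega
      · rwa [← hP, tsub_add_cancel_of_le hle]
    · rintro ⟨d, ⟨hd, hPd⟩, rfl⟩
      refine ⟨⟨?_, (hP d).mpr hPd⟩, by simp⟩
      rw [map_add, weight_single, hd, smul_eq_mul, mul_comm]
  have hlow : {d | weight w d = n + w i * k ∧ P d} \ {d | k ≤ d i} =
      {d | weight w d = n + w i * k ∧ P d ∧ d i < k} := by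
    ext d
    simp [not_le, and_assoc]
  rw [monomialCount, ← Set.ncard_inter_add_ncard_sdiff_eq_ncard _ {d | k ≤ d i} hfin, hhigh,
    hlow, Set.ncard_image_of_injective _ (add_left_injective _)]
  rfl

theorem monomialCount_of_lt_mul (i : σ) {k n : ℕ} (hn : n < w i * k) :
    monomialCount w P n = monomialCount w (fun d => P d ∧ d i < k) n := by
  unfold monomialCount
  congr 1
  ext d
  simp only [Set.mem_ofPred_eq]
  constructor
  · rintro ⟨rfl, hPd⟩
    exact ⟨rfl, hPd, Nat.lt_of_mul_lt_mul_left ((mul_apply_le_weight w d i).trans_lt hn)⟩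
  · exact fun ⟨hd, hPd, _⟩ => ⟨hd, hPd⟩

end Finsupp

open Finsupp

theorem wts_ne_zero : ∀ i, wts i ≠ 0 := by decide

theorem weight_wts (d : Fin 4 →₀ ℕ) : weight wts d = d 0 + 6 * d 1 + 14 * d 2 + 21 * d 3 := by
  simp [weight_eq_sum, Fin.sum_univ_four, wts, mul_comm]

def boxCount (m : ℕ) : ℕ :=
  ((Finset.range 42 ×ˢ Finset.range 7 ×ˢ Finset.range 3).filter fun t =>
    t.1 + 6 * t.2.1 + 14 * t.2.2 ≤ m ∧ (m - (t.1 + 6 * t.2.1 + 14 * t.2.2)) % 21 = 0).card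

theorem monomialCount_eq_boxCount (m : ℕ) :
    monomialCount wts (fun d => (d 0 < 42 ∧ d 1 < 7) ∧ d 2 < 3) m = boxCount m := by
  have hinj : Set.InjOn (fun d : Fin 4 →₀ ℕ => (d 0, d 1, d 2))
      {d | weight wts d = m ∧ (d 0 < 42 ∧ d 1 < 7) ∧ d 2 < 3} := by
    intro d hd d' hd' h
    simp only [Set.mem_ofPred_eq, weight_wts, Prod.mk.injEq] at hd hd' h
    ext i
    fin_cases i <;> simp only [Fin.isValue, Fin.zero_eta, Fin.mk_one, Fin.reduceFinMk] <;> omega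
  rw [monomialCount, boxCount, ← Set.ncard_coe_finset, ← hinj.ncard_image]
  congr 1
  ext ⟨a, b, c⟩
  simp only [Set.mem_image, Set.mem_ofPred_eq, weight_wts, Finset.coe_filter, Finset.mem_product,
    Finset.mem_range, Prod.mk.injEq]
  constructor
  · rintro ⟨d, ⟨hd, hlt⟩, rfl, rfl, rfl⟩
    omega
  · rintro ⟨⟨ha, hb, hc⟩, hle, hmod⟩
    refine ⟨equivFunOnFinite.symm ![a, b, c, (m - (a + 6 * b + 14 * c)) / 21], ?_⟩
    simp only [Fin.isValue, equivFunOnFinite_symm_apply_apply, Matrix.cons_val_zero,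
      Matrix.cons_val_one, Matrix.cons_val, and_self, and_true]
    omega

local notation "Nw" => monomialCount wts fun d => d 0 < 42
local notation "Nwx" => monomialCount wts fun d => d 0 < 42 ∧ d 1 < 7
local notation "Nwxy" => monomialCount wts fun d => (d 0 < 42 ∧ d 1 < 7) ∧ d 2 < 3

theorem gradedPieceDim_eq_Nw {f : MvPolynomial (Fin 4) ℂ} (hf0 : f ≠ 0)
    (hf : IsWeightedHomogeneous wts f 42) (n : ℕ) : gradedPieceDim f n = Nw n := by
  have hN (m : ℕ) : finrank ℂ (weightedHomogeneousSubmodule ℂ wts m) =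
      monomialCount wts (fun _ => True) m := by
    simp only [finrank_weightedHomogeneousSubmodule, monomialCount, and_true]
  rcases lt_or_ge n 42 with hn | hn
  · rw [gradedPieceDim, finrank_map_mk_weightedHomogeneousSubmodule_of_lt hf hn, hN,
      monomialCount_of_lt_mul 0 (k := 42) (by simpa [wts] using hn)]
    simp only [true_and]
  · obtain ⟨m, rfl⟩ := Nat.exists_eq_add_of_le hn
    have hdim := finrank_map_mk_weightedHomogeneousSubmodule_add wts_ne_zero hf0 hf m
    have hsplit :=
      monomialCount_add_mul (P := fun _ => True) wts_ne_zero 0 42 (fun _ => Iff.rfl) m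
    simp only [true_and] at hsplit
    rw [show m + wts 0 * 42 = 42 + m by simp [wts, add_comm]] at hsplit
    rw [hN, hN] at hdim
    rw [gradedPieceDim]
    omega

theorem Nw_add_42 (n : ℕ) : Nw (n + 42) = Nw n + Nwx (n + 42) :=
  monomialCount_add_mul wts_ne_zero 1 7 (fun d => by simp) n

theorem Nw_of_lt_42 {n : ℕ} (hn : n < 42) : Nw n = Nwx n :=
  monomialCount_of_lt_mul 1 (by simpa [wts] using hn)

theorem Nwx_add_42 (n : ℕ) : Nwx (n + 42) = Nwx n + Nwxy (n + 42) :=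
  monomialCount_add_mul wts_ne_zero 2 3 (fun d => by simp) n

theorem Nwx_of_lt_42 {n : ℕ} (hn : n < 42) : Nwx n = Nwxy n :=
  monomialCount_of_lt_mul 2 (by simpa [wts] using hn)

theorem boxCount_add_21 {m : ℕ} (hm : 85 ≤ m) : boxCount (m + 21) = boxCount m := by
  -- every triple of the box has `a + 6 * b + 14 * c ≤ 105 < m + 21`
  unfold boxCount
  congr 1
  refine Finset.filter_congr fun t ht => ?_
  simp only [Finset.mem_product, Finset.mem_range] at ht
  omega

theorem boxCount_eq_42 {m : ℕ} (hm : 85 ≤ m) : boxCount m = 42 := by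
  induction m using Nat.strong_induction_on with
  | _ m ih =>
    rcases lt_or_ge m 106 with h | h
    · have hbase : ∀ m < 106, 85 ≤ m → boxCount m = 42 := by decide +kernel
      exact hbase m h hm
    · obtain ⟨k, rfl⟩ : ∃ k, m = k + 21 := ⟨m - 21, by omega⟩
      rw [boxCount_add_21 (by omega), ih k (by omega) (by omega)]

theorem Nw_zero : Nw 0 = 1 := by
  rw [Nw_of_lt_42 (by norm_num), Nwx_of_lt_42 (by norm_num), monomialCount_eq_boxCount]
  decide +kernel

theorem Nwx_42 : Nwx 42 = 22 := by
  rw [show Nwx 42 = Nwx 0 + Nwxy 42 from Nwx_add_42 0, Nwx_of_lt_42 (by norm_num),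
    monomialCount_eq_boxCount, monomialCount_eq_boxCount]
  decide +kernel

theorem Nwx_add_42_eq_add_21 {n : ℕ} (hn : 1 ≤ n) : Nwx (n + 42) = n + 21 := by
  induction n using Nat.strong_induction_on with
  | _ n ih =>
    rw [Nwx_add_42, monomialCount_eq_boxCount]
    rcases lt_trichotomy n 42 with h | rfl | h
    · have hbase : ∀ n < 42, 1 ≤ n → boxCount n + boxCount (n + 42) = n + 21 := by
        decide +kernel
      rw [Nwx_of_lt_42 h, monomialCount_eq_boxCount]
      exact hbase n h hn
    · rw [Nwx_42]
      decide +kernel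
    · obtain ⟨k, rfl⟩ : ∃ k, n = k + 42 := ⟨n - 42, by omega⟩
      rw [ih k (by omega) (by omega), boxCount_eq_42 (by omega)]

theorem Nw_add_42_of_one_le {n : ℕ} (hn : 1 ≤ n) : Nw (n + 42) = Nw n + n + 21 := by
  rw [Nw_add_42, Nwx_add_42_eq_add_21 hn, add_assoc]

def hilbertQuasiPoly (n : ℕ) : ℚ :=
  2 + (n : ℚ) ^ 2 / 84 + delta2 (n % 2) + delta3 (n % 3) + delta7 (n % 7)

theorem hilbertQuasiPoly_add_42 (n : ℕ) :
    hilbertQuasiPoly (n + 42) = hilbertQuasiPoly n + n + 21 := by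
  have h2 : (n + 42) % 2 = n % 2 := by omega
  have h3 : (n + 42) % 3 = n % 3 := by omega
  have h7 : (n + 42) % 7 = n % 7 := by omega
  rw [hilbertQuasiPoly, hilbertQuasiPoly, h2, h3, h7]
  push_cast
  ring

theorem Nw_eq_hilbertQuasiPoly {n : ℕ} (hn : 1 ≤ n) : (Nw n : ℚ) = hilbertQuasiPoly n := by
  induction n using Nat.strong_induction_on with
  | _ n ih =>
    rcases lt_trichotomy n 42 with h | rfl | h
    · have hbase : ∀ n < 42, 1 ≤ n → (boxCount n : ℚ) = hilbertQuasiPoly n := by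
        decide +kernel
      rw [Nw_of_lt_42 h, Nwx_of_lt_42 h, monomialCount_eq_boxCount]
      exact hbase n h hn
    · rw [show Nw 42 = Nw 0 + Nwx 42 from Nw_add_42 0, Nw_zero, Nwx_42]
      norm_num [hilbertQuasiPoly, delta2, delta3, delta7]
    · obtain ⟨k, rfl⟩ : ∃ k, n = k + 42 := ⟨n - 42, by omega⟩
      rw [Nw_add_42_of_one_le (by omega), hilbertQuasiPoly_add_42, ← ih k (by omega) (by omega)]
      push_cast
      ring

/-- Hilbert function of a hypersurface of weighted degree `42` in `ℙ(1,6,14,21)`. -/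
theorem statement2 (f : MvPolynomial (Fin 4) ℂ) (hf0 : f ≠ 0)
    (hf : IsWeightedHomogeneous wts f 42) :
    (∀ n : ℕ, 1 ≤ n →
      (gradedPieceDim f n : ℚ) =
        2 + (n : ℚ) ^ 2 / 84 + delta2 (n % 2) + delta3 (n % 3) + delta7 (n % 7)) ∧
    gradedPieceDim f 0 = 1 := by
  refine ⟨fun n hn => ?_, ?_⟩
  · rw [gradedPieceDim_eq_Nw hf0 hf]
    exact Nw_eq_hilbertQuasiPoly hn
  · rw [gradedPieceDim_eq_Nw hf0 hf, Nw_zero]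
end

section
/- For every nonzero primitive vector v ∈ ℤ¹² with vᵀ·G₁₂·v = 0 there exists a vector u ∈ ℤ¹² with uᵀ·G₁₂·u = 0 and vᵀ·G₁₂·u = 1. In other words, every primitive isotropic vector of the even unimodular lattice II_{2,10} ≅ U² ⊕ E₈ is contained in a sublattice isometric to the hyperbolic plane U. -/
open Matrix

/-- The hyperbolic plane `U`. -/
def Umat : Matrix (Fin 2) (Fin 2) ℤ := !![0, 1; 1, 0]

/-- The negative definite `E₈` Gram matrix: the negative of the Cartan matrix of `E₈`
(chain `0–1–2–3–4–5–6` with node `7` attached to node `2`). -/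
def E8neg : Matrix (Fin 8) (Fin 8) ℤ :=
  !![-2,  1,  0,  0,  0,  0,  0,  0;
      1, -2,  1,  0,  0,  0,  0,  0;
      0,  1, -2,  1,  0,  0,  0,  1;
      0,  0,  1, -2,  1,  0,  0,  0;
      0,  0,  0,  1, -2,  1,  0,  0;
      0,  0,  0,  0,  1, -2,  1,  0;
      0,  0,  0,  0,  0,  1, -2,  0;
      0,  0,  1,  0,  0,  0,  0, -2]

/-- The Gram matrix of `U ⊕ E₈`. -/
def UE8 : Matrix (Fin 10) (Fin 10) ℤ :=
  Matrix.reindex finSumFinEquiv finSumFinEquiv (Matrix.fromBlocks Umat 0 0 E8neg)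

/-- The Gram matrix of the even unimodular lattice `II_{2,10} ≅ U² ⊕ E₈`. -/
def G12 : Matrix (Fin 12) (Fin 12) ℤ :=
  Matrix.reindex finSumFinEquiv finSumFinEquiv (Matrix.fromBlocks Umat 0 0 UE8)

/-- A vector of `ℤ¹²` is primitive if the gcd of its coordinates is `1`. -/
def IsPrimitiveVec (v : Fin 12 → ℤ) : Prop := Finset.univ.gcd v = 1

/-!
Unimodularity makes `x ↦ v ⬝ᵥ G12 *ᵥ x` surjective onto `ℤ` for primitive `v` (Bézout for the
coordinates of `v`, then `G12⁻¹`), so some `w` pairs to `1` with `v`. The form is even, so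
`w ⬝ᵥ G12 *ᵥ w = 2m`, and `u = w - m • v` is isotropic while still pairing to `1` with the
isotropic vector `v`.
-/

def E8negInv : Matrix (Fin 8) (Fin 8) ℤ :=
  !![ -4,  -7, -10,  -8,  -6,  -4, -2,  -5;
      -7, -14, -20, -16, -12,  -8, -4, -10;
     -10, -20, -30, -24, -18, -12, -6, -15;
      -8, -16, -24, -20, -15, -10, -5, -12;
      -6, -12, -18, -15, -12,  -8, -4,  -9;
      -4,  -8, -12, -10,  -8,  -6, -3,  -6;
      -2,  -4,  -6,  -5,  -4,  -3, -2,  -3;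
      -5, -10, -15, -12,  -9,  -6, -3,  -8]

section Lattice

variable {n : Type*} [Fintype n] {G : Matrix n n ℤ}

theorem even_dotProduct_mulVec_self [LinearOrder n] (hG : G.IsSymm) (hdiag : ∀ i, Even (G i i))
    (x : n → ℤ) : Even (x ⬝ᵥ G *ᵥ x) := by
  set L : Matrix n n ℤ := of fun i j => if j < i then G i j else 0
  have hsplit : G = L + Lᵀ + diagonal fun i => G i i := by
    ext i j
    rcases lt_trichotomy i j with h | rfl | h
    · simp [L, h, h.ne, not_lt_of_gt h, hG.apply j i]
    · simp [L]
    · simp [L, h, h.ne', not_lt_of_gt h]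
  have hLt : x ⬝ᵥ Lᵀ *ᵥ x = x ⬝ᵥ L *ᵥ x := by
    rw [dotProduct_mulVec, vecMul_transpose, dotProduct_comm]
  have hdiag' : Even (x ⬝ᵥ (diagonal fun i => G i i) *ᵥ x) := by
    simp only [mulVec_diagonal, dotProduct]
    exact Finset.even_sum _ fun i _ => ((hdiag i).mul_right _).mul_left _
  rw [hsplit, add_mulVec, add_mulVec, dotProduct_add, dotProduct_add, hLt]
  exact Even.add ⟨_, rfl⟩ hdiag'

theorem exists_dotProduct_mulVec_eq_one [DecidableEq n] (hG : IsUnit G.det) {v : n → ℤ}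
    (hv : Finset.univ.gcd v = 1) : ∃ w, v ⬝ᵥ G *ᵥ w = 1 := by
  obtain ⟨c, hc⟩ := Finset.gcd_eq_sum_mul Finset.univ v
  refine ⟨G⁻¹ *ᵥ c, ?_⟩
  rw [mulVec_mulVec, mul_nonsing_inv G hG, one_mulVec, ← hv, hc]
  rfl

theorem exists_isotropic_dotProduct_mulVec_eq_one (hG : G.IsSymm)
    (heven : ∀ x, Even (x ⬝ᵥ G *ᵥ x)) {v w : n → ℤ} (hv : v ⬝ᵥ G *ᵥ v = 0)
    (hvw : v ⬝ᵥ G *ᵥ w = 1) : ∃ u, u ⬝ᵥ G *ᵥ u = 0 ∧ v ⬝ᵥ G *ᵥ u = 1 := by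
  obtain ⟨m, hm⟩ := heven w
  have hwv : w ⬝ᵥ G *ᵥ v = 1 := by
    rw [dotProduct_mulVec, ← mulVec_transpose, hG.eq, dotProduct_comm, hvw]
  refine ⟨w - m • v, ?_, ?_⟩
  · simp only [mulVec_sub, mulVec_smul, dotProduct_sub, sub_dotProduct, dotProduct_smul,
      smul_dotProduct, hm, hv, hvw, hwv, smul_eq_mul]
    ring
  · simp only [mulVec_sub, mulVec_smul, dotProduct_sub, dotProduct_smul, hv, hvw, smul_zero,
      sub_zero]

end Lattice

theorem isUnit_det_E8neg : IsUnit E8neg.det :=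
  isUnit_det_of_right_inverse (B := E8negInv) (by decide)

theorem isUnit_det_Umat : IsUnit Umat.det := by
  simp [Umat, det_fin_two]

theorem isUnit_det_UE8 : IsUnit UE8.det := by
  rw [UE8, det_reindex_self, det_fromBlocks_zero₂₁]
  exact isUnit_det_Umat.mul isUnit_det_E8neg

theorem isUnit_det_G12 : IsUnit G12.det := by
  rw [G12, det_reindex_self, det_fromBlocks_zero₂₁]
  exact isUnit_det_Umat.mul isUnit_det_UE8

theorem isSymm_G12 : G12.IsSymm := by decide

theorem even_diag_G12 : ∀ i, Even (G12 i i) := by decide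

theorem statement8_general (v : Fin 12 → ℤ) (hvprim : IsPrimitiveVec v)
    (hv : v ⬝ᵥ G12.mulVec v = 0) :
    ∃ u : Fin 12 → ℤ, u ⬝ᵥ G12.mulVec u = 0 ∧ v ⬝ᵥ G12.mulVec u = 1 := by
  obtain ⟨w, hvw⟩ := exists_dotProduct_mulVec_eq_one isUnit_det_G12 hvprim
  exact exists_isotropic_dotProduct_mulVec_eq_one isSymm_G12
    (even_dotProduct_mulVec_self isSymm_G12 even_diag_G12) hv hvw

/-- Every primitive isotropic vector of the even unimodular lattice `II_{2,10} ≅ U² ⊕ E₈`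
is contained in a sublattice isometric to the hyperbolic plane `U`. -/
theorem statement8 (v : Fin 12 → ℤ) (hv0 : v ≠ 0) (hvprim : IsPrimitiveVec v)
    (hv : v ⬝ᵥ G12.mulVec v = 0) :
    ∃ u : Fin 12 → ℤ, u ⬝ᵥ G12.mulVec u = 0 ∧ v ⬝ᵥ G12.mulVec u = 1 :=
  statement8_general v hvprim hv
end

section
/- Let v = (1/7, 2/7, 3/7, 4/7, 5/7, 6/7, 1, 2/3, 1/3, 1/2) ∈ ℚ¹⁰. Then v is the unique vector in ℚ¹⁰ with v₆ = 1 such that (G·v)_j = 0 for every j ≠ 6; moreover G·v = (1/42)·e₆, and hence vᵀ·G·v = 1/42. (Geometrically: on the minimal resolution, the pullback of the boundary curve D = π(Θ₆) is π*D = (1/7)Θ₀ + (2/7)Θ₁ + (3/7)Θ₂ + (4/7)Θ₃ + (5/7)Θ₄ + (6/7)Θ₅ + Θ₆ + (2/3)Θ₇ + (1/3)Θ₈ + (1/2)Θ₉, and D² = (π*D)² = 1/42, which is the minimal volume (K_X+D)² = 1/42 of Theorem 1.3(2).) -/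
/-!
Away from `Θ₆` the equations `(G v)ⱼ = 0` say that `v` is linear along each arm of the
`T_{2,3,7}` tree and vanishes one step past its end, so `v₆ = 1` forces `v = k/p` at distance
`p - k` from `Θ₆` on the arm of `p - 1` curves, `p ∈ {7, 3, 2}`. The remaining entry is then
`(G v)₆ = 1 - 1/7 - 1/3 - 1/2 = 1/42`.
-/

open Matrix

/-- The Gram matrix (over `ℚ`) of the `T_{2,3,7}` configuration of ten `(-2)`-curves
`Θ₀, …, Θ₉`: a chain `Θ₀–Θ₁–⋯–Θ₈` with `Θ₉` attached to `Θ₆`. -/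
def T237GramQ : Matrix (Fin 10) (Fin 10) ℚ := Matrix.of fun i j =>
  if i = j then -2
  else if (i.val + 1 = j.val ∧ j.val ≤ 8) ∨ (j.val + 1 = i.val ∧ i.val ≤ 8) then 1
  else if (i.val = 6 ∧ j.val = 9) ∨ (i.val = 9 ∧ j.val = 6) then 1
  else 0

/-- The coefficient vector of the pullback
`π*D = (1/7)Θ₀ + (2/7)Θ₁ + (3/7)Θ₂ + (4/7)Θ₃ + (5/7)Θ₄ + (6/7)Θ₅ + Θ₆ + (2/3)Θ₇
     + (1/3)Θ₈ + (1/2)Θ₉`. -/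
def pullbackD : Fin 10 → ℚ := ![1/7, 2/7, 3/7, 4/7, 5/7, 6/7, 1, 2/3, 1/3, 1/2]

lemma T237GramQ_mulVec (v : Fin 10 → ℚ) :
    T237GramQ *ᵥ v =
      ![-2 * v 0 + v 1, v 0 - 2 * v 1 + v 2, v 1 - 2 * v 2 + v 3, v 2 - 2 * v 3 + v 4,
        v 3 - 2 * v 4 + v 5, v 4 - 2 * v 5 + v 6, v 5 - 2 * v 6 + v 7 + v 9,
        v 6 - 2 * v 7 + v 8, v 7 - 2 * v 8, v 6 - 2 * v 9] := by
  ext j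
  fin_cases j <;> simp [mulVec, dotProduct, Fin.sum_univ_succ, T237GramQ] <;> ring

lemma T237GramQ_mulVec_pullbackD :
    T237GramQ *ᵥ pullbackD = (1 / 42 : ℚ) • Pi.single 6 1 := by
  rw [T237GramQ_mulVec]
  ext j
  fin_cases j <;> simp [pullbackD] <;> norm_num

lemma eq_pullbackD_of_mulVec_apply_eq_zero {v : Fin 10 → ℚ} (h6 : v 6 = 1)
    (hv : ∀ j : Fin 10, j ≠ 6 → (T237GramQ *ᵥ v) j = 0) : v = pullbackD := by
  rw [T237GramQ_mulVec] at hv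
  simp only [Fin.isValue, ne_eq, Nat.succ_eq_add_one, Nat.reduceAdd, neg_mul, Fin.forall_fin_succ,
    Fin.reduceEq, not_false_eq_true, cons_val_zero, forall_const, cons_val_succ, Fin.succ_zero_eq_one,
    Fin.succ_one_eq_two, Fin.reduceSucc, not_true_eq_false, IsEmpty.forall_iff, cons_val_fin_one,
    and_true, true_and] at hv
  obtain ⟨e0, e1, e2, e3, e4, e5, e7, e8, e9⟩ := hv
  ext i
  fin_cases i <;> simp [pullbackD] <;> linarith

/-- `pullbackD` is the unique vector `v ∈ ℚ¹⁰` with `v₆ = 1` and `(G·v)ⱼ = 0` for `j ≠ 6`;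
moreover `G·v = (1/42)·e₆`, hence `vᵀ·G·v = 1/42`, the minimal volume `(K_X + D)²`. -/
theorem statement14 :
    pullbackD 6 = 1 ∧
    (∀ j : Fin 10, j ≠ 6 → T237GramQ.mulVec pullbackD j = 0) ∧
    (∀ v : Fin 10 → ℚ, v 6 = 1 → (∀ j : Fin 10, j ≠ 6 → T237GramQ.mulVec v j = 0) →
      v = pullbackD) ∧
    T237GramQ.mulVec pullbackD = (1/42 : ℚ) • (Pi.single (6 : Fin 10) (1 : ℚ) : Fin 10 → ℚ) ∧
    pullbackD ⬝ᵥ T237GramQ.mulVec pullbackD = 1/42 := by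
  refine ⟨rfl, fun j hj => ?_, fun v h6 hv => eq_pullbackD_of_mulVec_apply_eq_zero h6 hv,
    T237GramQ_mulVec_pullbackD, ?_⟩
  · simp [T237GramQ_mulVec_pullbackD, hj]
  · rw [T237GramQ_mulVec_pullbackD, dotProduct_smul, dotProduct_single]
    simp [pullbackD]
end

section
/- Let c = (1/13, 2/13, 3/13, 4/13, 5/13, 6/13, 0, 6/11, 4/11, 2/11, 3/11) ∈ ℚ¹¹. Then c is the unique vector in ℚ¹¹ with c₆ = 0 such that (κ + M·c)_j = 0 for every index j ≠ 6; moreover (κ + M·c)₆ = 1/143 and −1 + κᵀ·c = 1/143. (Geometrically: on the minimal resolution X̃, which has K_{X̃}² = −1, writing π*K_X = K_{X̃} + Σ cᵢ·Cᵢ over the eleven curves C₀,…,C₁₀ = Θ̃₀,…,Θ̃₅, E, Θ̃₆, Θ̃₇, Θ̃₈, Θ̃₉, the discrepancy coefficients are exactly c, and K_X² = K_{X̃}² + κᵀ·c = 1/143, the minimal volume of stable surfaces with p_g = 1.) -/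
open Matrix

/-- The intersection matrix of the eleven curves `Θ̃₀,…,Θ̃₅, E, Θ̃₆, Θ̃₇, Θ̃₈, Θ̃₉`
(indices `0–10`) on the minimal resolution `X̃`: the chain `Θ̃₀–⋯–Θ̃₅–E–Θ̃₆–Θ̃₇–Θ̃₈` with
`Θ̃₉` attached to `Θ̃₆`, self-intersections `-2` except `Θ̃₅² = Θ̃₆² = -3` and `E² = -1`. -/
def MGram : Matrix (Fin 11) (Fin 11) ℚ := Matrix.of fun i j =>
  if i = j then
    (if i.val ≤ 4 then -2
     else if i.val = 5 then -3
     else if i.val = 6 then -1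
     else if i.val = 7 then -3
     else -2)
  else if (i.val + 1 = j.val ∧ j.val ≤ 9) ∨ (j.val + 1 = i.val ∧ i.val ≤ 9) then 1
  else if (i.val = 7 ∧ j.val = 10) ∨ (i.val = 10 ∧ j.val = 7) then 1
  else 0

/-- The vector `κ` of intersection numbers of the canonical class with the eleven curves:
`K·C = -2 - C²` for a smooth rational curve `C`. -/
def kappa : Fin 11 → ℚ := ![0, 0, 0, 0, 0, 1, -1, 1, 0, 0, 0]

/-- The discrepancy coefficients of `π*K_X = K_{X̃} + Σ cᵢ Cᵢ`. -/
def cvec : Fin 11 → ℚ := ![1/13, 2/13, 3/13, 4/13, 5/13, 6/13, 0, 6/11, 4/11, 2/11, 3/11]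

/-!
Since `c₆ = 0`, the ten equations `(κ + M c)ⱼ = 0`, `j ≠ 6`, split along the two components
of the configuration with `E` removed. On the chain `Θ̃₀–⋯–Θ̃₅` they force `cₖ = (k + 1) c₀`
and then `13 c₀ = 1`; on the fork `Θ̃₆, Θ̃₇, Θ̃₈, Θ̃₉` they force `c₈ = 2 c₉`, `c₁₀ = c₇ / 2`,
`c₇ = 3 c₉` and then `11 c₉ = 2`. Both remaining numbers reduce to `-1 + c₅ + c₇`, which is
`-1 + 6/13 + 6/11 = 1/143`.
-/

theorem kappa_add_mulVec_MGram (c : Fin 11 → ℚ) :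
    kappa + MGram *ᵥ c =
      ![-2 * c 0 + c 1, c 0 - 2 * c 1 + c 2, c 1 - 2 * c 2 + c 3, c 2 - 2 * c 3 + c 4,
        c 3 - 2 * c 4 + c 5, 1 + c 4 - 3 * c 5 + c 6, -1 + c 5 - c 6 + c 7,
        1 + c 6 - 3 * c 7 + c 8 + c 10, c 7 - 2 * c 8 + c 9, c 8 - 2 * c 9, c 7 - 2 * c 10] := by
  ext j
  fin_cases j <;> simp [MGram, kappa, mulVec, dotProduct, Fin.sum_univ_succ] <;> ring

theorem kappa_add_mulVec_cvec : kappa + MGram *ᵥ cvec = Pi.single 6 (1 / 143) := by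
  rw [kappa_add_mulVec_MGram]
  ext j
  fin_cases j <;> simp [cvec, Fin.ext_iff] <;> norm_num

theorem eq_cvec_of_kappa_add_mulVec_eq_zero (c : Fin 11 → ℚ) (h6 : c 6 = 0)
    (h : ∀ j : Fin 11, j ≠ 6 → (kappa + MGram *ᵥ c) j = 0) : c = cvec := by
  simp only [kappa_add_mulVec_MGram] at h
  simp [Fin.forall_fin_succ, h6] at h
  obtain ⟨h0, h1, h2, h3, h4, h5, h7, h8, h9, h10⟩ := h
  ext j
  fin_cases j <;> simp [cvec] <;> linarith

theorem kappa_dotProduct_cvec : kappa ⬝ᵥ cvec = 144 / 143 := by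
  norm_num [kappa, cvec, dotProduct, Fin.sum_univ_succ]

/-- `cvec` is the unique vector `c ∈ ℚ¹¹` with `c₆ = 0` and `(κ + M·c)ⱼ = 0` for `j ≠ 6`;
moreover `(κ + M·c)₆ = 1/143` and `K_X² = K_{X̃}² + κᵀ·c = -1 + κᵀ·c = 1/143`, the minimal
volume of stable surfaces with `p_g = 1`. -/
theorem statement15 :
    cvec 6 = 0 ∧
    (∀ j : Fin 11, j ≠ 6 → (kappa + MGram.mulVec cvec) j = 0) ∧
    (∀ c : Fin 11 → ℚ, c 6 = 0 → (∀ j : Fin 11, j ≠ 6 → (kappa + MGram.mulVec c) j = 0) →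
      c = cvec) ∧
    (kappa + MGram.mulVec cvec) 6 = 1/143 ∧
    -1 + kappa ⬝ᵥ cvec = 1/143 := by
  refine ⟨rfl, fun j hj => ?_, eq_cvec_of_kappa_add_mulVec_eq_zero, ?_, ?_⟩
  · rw [kappa_add_mulVec_cvec, Pi.single_eq_of_ne hj]
  · rw [kappa_add_mulVec_cvec, Pi.single_eq_same]
  · rw [kappa_dotProduct_cvec]
    norm_num
end
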